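/- The symmetric trigonometric moment curve γ_{2k+1} : S^1 → S^{2k+1}, given by γ_{2k+1}(t) = (1/√(k+1))(cos t, sin t, cos 3t, sin 3t, ..., cos((2k+1)t), sin((2k+1)t)), satisfies |d_{2k+1}(γ_{2k+1}(s), γ_{2k+1}(t)) − d_1(s,t)| ≤ 2πk/(2k+1) for all s, t ∈ S^1, where d_n is the geodesic distance on the unit sphere S^n, i.e., the distortion of γ_{2k+1} is at most δ_k = 2πk/(2k+1). -/

import Mathlib

open Real
open scoped RealInnerProductSpace

/-- The symmetric trigonometric moment curve `γ_{2k+1} : ℝ → ℝ^{2k+2}`,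
`γ_{2k+1}(t) = (1/√(k+1))(cos t, sin t, cos 3t, sin 3t, …, cos((2k+1)t), sin((2k+1)t))`. -/
noncomputable def gammaTMC (k : ℕ) (t : ℝ) : EuclideanSpace ℝ (Fin (2 * k + 2)) :=
  WithLp.toLp 2 fun i =>
    (if i.val % 2 = 0 then Real.cos ((2 * (i.val / 2 : ℕ) + 1) * t)
     else Real.sin ((2 * (i.val / 2 : ℕ) + 1) * t)) / Real.sqrt (k + 1)

/-- The geodesic distance on the unit sphere `Sⁿ ⊂ ℝ^{n+1}`: `d(x,y) = arccos(x·y)`. -/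
noncomputable def sphDist {n : ℕ} (x y : EuclideanSpace ℝ (Fin n)) : ℝ :=
  Real.arccos ⟪x, y⟫

/-- The geodesic distance on `S¹ = ℝ/2πℤ` between (the classes of) `s` and `t`. -/
noncomputable def circDist (s t : ℝ) : ℝ :=
  dist (s : AddCircle (2 * π)) (t : AddCircle (2 * π))

lemma arccos_antitone {x y : ℝ} (h : x ≤ y) : Real.arccos y ≤ Real.arccos x := by
  unfold Real.arccos
  have := Real.monotone_arcsin h
  linarith

lemma sum_range_double (f : ℕ → ℝ) (n : ℕ) :
    ∑ i ∈ Finset.range (2 * n), f i = ∑ j ∈ Finset.range n, (f (2 * j) + f (2 * j + 1)) := by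
  induction n with
  | zero => simp
  | succ n ih =>
    have h : 2 * (n + 1) = (2 * n + 1) + 1 := by ring
    rw [h, Finset.sum_range_succ, Finset.sum_range_succ, ih, Finset.sum_range_succ]
    ring

lemma inner_gamma (k : ℕ) (s t : ℝ) :
    ⟪gammaTMC k s, gammaTMC k t⟫ =
      (∑ j ∈ Finset.range (k + 1), Real.cos ((2 * j + 1) * (s - t))) / (k + 1) := by
  have hsq : Real.sqrt (k + 1) * Real.sqrt (k + 1) = (k : ℝ) + 1 :=
    Real.mul_self_sqrt (by positivity)
  set F : ℕ → ℝ := fun i =>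
    ((if i % 2 = 0 then Real.cos ((2 * (i / 2 : ℕ) + 1) * s)
      else Real.sin ((2 * (i / 2 : ℕ) + 1) * s)) / Real.sqrt (k + 1)) *
    ((if i % 2 = 0 then Real.cos ((2 * (i / 2 : ℕ) + 1) * t)
      else Real.sin ((2 * (i / 2 : ℕ) + 1) * t)) / Real.sqrt (k + 1)) with hF
  have step1 : ⟪gammaTMC k s, gammaTMC k t⟫ = ∑ i ∈ Finset.range (2 * k + 2), F i := by
    rw [PiLp.inner_apply, ← Fin.sum_univ_eq_sum_range F (2 * k + 2)]
    exact Finset.sum_congr rfl fun i _ => by simp [hF, gammaTMC, RCLike.inner_apply, mul_comm]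
  rw [step1, show 2 * k + 2 = 2 * (k + 1) from by ring, sum_range_double, Finset.sum_div]
  refine Finset.sum_congr rfl fun j hj => ?_
  have e1 : (2 * j) % 2 = 0 := by omega
  have e2 : (2 * j) / 2 = j := by omega
  have e3 : (2 * j + 1) % 2 = 1 := by omega
  have e4 : (2 * j + 1) / 2 = j := by omega
  simp only [hF, e1, e2, e3, e4, if_pos rfl, if_neg (by norm_num : ¬(1 = 0))]
  rw [div_mul_div_comm, div_mul_div_comm, hsq, ← add_div]
  rw [mul_sub, Real.cos_sub]
  simp only [if_true]

/-- Distortion bound for the TMC embedding: for all `s, t ∈ S¹`,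
`|d_{2k+1}(γ_{2k+1}(s), γ_{2k+1}(t)) − d₁(s,t)| ≤ δ_k = 2πk/(2k+1)`. -/
theorem stmt7 (k : ℕ) (hk : 1 ≤ k) (s t : ℝ) :
    |sphDist (gammaTMC k s) (gammaTMC k t) - circDist s t| ≤ 2 * π * k / (2 * k + 1) := by
  have hπ := Real.pi_pos
  have hN : (0:ℝ) < 2 * k + 1 := by positivity
  have hk1 : (1:ℝ) ≤ (k:ℝ) := by exact_mod_cast hk
  set B := circDist s t with hBdef
  set δ : ℝ := 2 * π * k / (2 * k + 1) with hδdef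
  have hδeq : π - δ = π / (2 * k + 1) := by
    rw [hδdef]; field_simp; ring
  have hδpos : 0 < δ := by rw [hδdef]; positivity
  have hδlt : π / (2 * k + 1) ≤ δ := by
    rw [hδdef, div_le_div_iff₀ hN hN]
    have h1 : (0:ℝ) ≤ 2 * π * k - π := by nlinarith
    nlinarith [mul_nonneg h1 hN.le]
  -- B = |w| for w the reduced representative of s - t
  set m : ℤ := round ((2 * π)⁻¹ * (s - t)) with hm
  set w : ℝ := s - t - m * (2 * π) with hw
  have hBw : B = |w| := by
    rw [hBdef, circDist, dist_eq_norm]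
    have hcoe : (s : AddCircle (2 * π)) - (t : AddCircle (2 * π))
        = ((s - t : ℝ) : AddCircle (2 * π)) := by
      norm_cast
    rw [hcoe, AddCircle.norm_eq]
  have hB0 : 0 ≤ B := dist_nonneg
  have hround : |(2 * π)⁻¹ * (s - t) - m| ≤ 1 / 2 := by rw [hm]; exact abs_sub_round _
  have hBπ : B ≤ π := by
    have hw2 : w = (2 * π) * ((2 * π)⁻¹ * (s - t) - m) := by
      rw [hw, mul_sub, mul_inv_cancel_left₀ (by positivity : (2*π) ≠ 0)]
      ring
    rw [hBw, hw2, abs_mul, abs_of_pos (by positivity : (0:ℝ) < 2 * π)]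
    nlinarith [hround]
  -- cos((2j+1)(s-t)) = cos((2j+1)B)
  have hcos : ∀ j : ℕ, Real.cos ((2 * j + 1) * (s - t)) = Real.cos ((2 * j + 1) * B) := by
    intro j
    have h1 : (2 * (j:ℝ) + 1) * (s - t)
        = (2 * (j:ℝ) + 1) * w + (((2 * j + 1 : ℕ) : ℤ) * m : ℤ) * (2 * π) := by
      push_cast
      rw [hw]; ring
    rw [h1, Real.cos_add_int_mul_two_pi, hBw]
    have h2 : (2 * (j:ℝ) + 1) * |w| = |(2 * (j:ℝ) + 1) * w| := by
      rw [abs_mul, abs_of_pos (by positivity : (0:ℝ) < 2 * (j:ℝ) + 1)]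
    rw [h2, Real.cos_abs]
  have hinner : ⟪gammaTMC k s, gammaTMC k t⟫ =
      (∑ j ∈ Finset.range (k + 1), Real.cos ((2 * j + 1) * B)) / (k + 1) := by
    rw [inner_gamma]
    congr 1
    exact Finset.sum_congr rfl fun j _ => hcos j
  set A := sphDist (gammaTMC k s) (gammaTMC k t) with hAdef
  have hA0 : 0 ≤ A := Real.arccos_nonneg _
  have hAπ : A ≤ π := Real.arccos_le_pi _
  have hAeq : A = Real.arccos
      ((∑ j ∈ Finset.range (k + 1), Real.cos ((2 * j + 1) * B)) / (k + 1)) := by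
    rw [hAdef, sphDist, hinner]
  clear_value A B
  clear hinner hcos hround hBw hAdef hBdef
  clear_value m w
  rw [abs_sub_le_iff]
  constructor
  · -- A - B ≤ δ
    by_cases hc : B ≤ π / (2 * k + 1)
    · -- small B : A ≤ (2k+1) B
      have hNBle : (2 * (k:ℝ) + 1) * B ≤ π := by
        calc (2 * (k:ℝ) + 1) * B ≤ (2 * k + 1) * (π / (2 * k + 1)) :=
              mul_le_mul_of_nonneg_left hc (le_of_lt hN)
          _ = π := by field_simp
      have hkey : Real.cos ((2 * k + 1) * B) ≤
          (∑ j ∈ Finset.range (k + 1), Real.cos ((2 * j + 1) * B)) / (k + 1) := by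
        rw [le_div_iff₀ (by positivity : (0:ℝ) < (k:ℝ) + 1)]
        have hterm : ∀ j ∈ Finset.range (k + 1),
            Real.cos ((2 * k + 1) * B) ≤ Real.cos ((2 * j + 1) * B) := by
          intro j hj
          have hjk : (j:ℝ) ≤ k := by
            exact_mod_cast Nat.lt_succ_iff.mp (Finset.mem_range.mp hj)
          apply Real.cos_le_cos_of_nonneg_of_le_pi (by positivity) hNBle
          nlinarith
        calc Real.cos ((2 * k + 1) * B) * ((k:ℝ) + 1)
            = ∑ _j ∈ Finset.range (k + 1), Real.cos ((2 * k + 1) * B) := by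
              simp [Finset.sum_const, mul_comm]
          _ ≤ _ := Finset.sum_le_sum hterm
      have hAle : A ≤ (2 * k + 1) * B := by
        rw [hAeq]
        calc Real.arccos _ ≤ Real.arccos (Real.cos ((2 * k + 1) * B)) :=
              arccos_antitone hkey
          _ = (2 * k + 1) * B := Real.arccos_cos (by positivity) hNBle
      have h2kB : 2 * (k:ℝ) * B ≤ δ := by
        calc 2 * (k:ℝ) * B ≤ 2 * k * (π / (2 * k + 1)) :=
              mul_le_mul_of_nonneg_left hc (by positivity)
          _ = δ := by rw [hδdef]; ring
      linarith
    · -- B ≥ π/(2k+1) : A ≤ π ≤ B + δ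
      push_neg at hc
      linarith
  · -- B - A ≤ δ
    by_cases hc : B ≤ δ
    · linarith
    · push_neg at hc
      set v : ℝ := π - B with hv
      have hv0 : 0 ≤ v := by rw [hv]; linarith
      have hvle : v ≤ π / (2 * k + 1) := by rw [hv]; linarith
      have hNv0 : 0 ≤ (2 * (k:ℝ) + 1) * v := by positivity
      have hNv : (2 * (k:ℝ) + 1) * v ≤ π := by
        calc (2 * (k:ℝ) + 1) * v ≤ (2 * k + 1) * (π / (2 * k + 1)) :=
              mul_le_mul_of_nonneg_left hvle (le_of_lt hN)
          _ = π := by field_simp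
      have hkey : (∑ j ∈ Finset.range (k + 1), Real.cos ((2 * j + 1) * B)) / (k + 1) ≤
          Real.cos (π - (2 * k + 1) * v) := by
        rw [Real.cos_pi_sub, div_le_iff₀ (by positivity : (0:ℝ) < (k:ℝ) + 1)]
        have hterm : ∀ j ∈ Finset.range (k + 1),
            Real.cos ((2 * j + 1) * B) ≤ -Real.cos ((2 * k + 1) * v) := by
          intro j hj
          have hjk : (j:ℝ) ≤ k := by
            exact_mod_cast Nat.lt_succ_iff.mp (Finset.mem_range.mp hj)
          have hrw : (2 * (j:ℝ) + 1) * B = ((2 * j + 1 : ℕ) : ℝ) * π - (2 * j + 1) * v := by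
            push_cast; rw [hv]; ring
          rw [hrw, Real.cos_nat_mul_pi_sub]
          have hodd : (-1 : ℝ) ^ (2 * j + 1) = -1 := by
            rw [pow_succ, pow_mul]; norm_num
          rw [hodd]
          have hcc : Real.cos ((2 * (k:ℝ) + 1) * v) ≤ Real.cos ((2 * (j:ℝ) + 1) * v) := by
            apply Real.cos_le_cos_of_nonneg_of_le_pi (by positivity) hNv
            nlinarith
          push_cast
          linarith
        calc (∑ j ∈ Finset.range (k + 1), Real.cos ((2 * j + 1) * B))
            ≤ ∑ _j ∈ Finset.range (k + 1), -Real.cos ((2 * k + 1) * v) :=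
              Finset.sum_le_sum hterm
          _ = -Real.cos ((2 * k + 1) * v) * ((k:ℝ) + 1) := by
              simp [Finset.sum_const, mul_comm]
      have hAge : π - (2 * k + 1) * v ≤ A := by
        rw [hAeq]
        calc π - (2 * (k:ℝ) + 1) * v
            = Real.arccos (Real.cos (π - (2 * k + 1) * v)) :=
              (Real.arccos_cos (by linarith) (by linarith)).symm
          _ ≤ _ := arccos_antitone hkey
      have h2kv : 2 * (k:ℝ) * v ≤ δ := by
        calc 2 * (k:ℝ) * v ≤ 2 * k * (π / (2 * k + 1)) :=
              mul_le_mul_of_nonneg_left hvle (by positivity)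
          _ = δ := by rw [hδdef]; ring
      have hBv : B = π - v := by rw [hv]; ring
      rw [hBv]
      linarith
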